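/- Let K be a field of characteristic 0 and let n ≥ 2. Then GL_n(K) contains a non-cyclic free subgroup; explicitly, the matrices A = I + 2·E_{21} and B = I + 2·E_{12} (where I is the identity matrix and E_{ij} is the matrix unit with a single 1 in position (i,j)) generate a free subgroup of rank 2 of GL_n(K), i.e., the group homomorphism from the free group on two generators to GL_n(K) sending the two generators to A and B, respectively, is injective. -/

import Mathlib

/-!
Sanov's argument. The transvections `A = 1 + 2·E₂₁` and `B = 1 + 2·E₁₂` are defined over `ℤ`,
and `GLₙ(ℤ) → GLₙ(K)` is injective in characteristic zero, so it suffices to work over an ordered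
ring. There `Aᵏ = 1 + 2k·E₂₁` with `|2k| ≥ 2` for `k ≠ 0`, so every nontrivial power of `A` moves
vectors with `|v₁| < |v₀|` to vectors with `|v₀| < |v₁|`, and symmetrically for `B`; the ping-pong
lemma then shows that `A` and `B` generate a free group.
-/

open Function Pointwise

theorem FreeGroup.injective_lift_of_ping_pong_zpow {ι G α : Type*} [Nontrivial ι] [Group G]
    [MulAction G α] (a : ι → G) (X : ι → Set α) (hX : ∀ i, (X i).Nonempty)
    (hXdisj : Pairwise (Disjoint on X))
    (hpp : Pairwise fun i j => ∀ k : ℤ, k ≠ 0 → a i ^ k • X j ⊆ X i) :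
    Injective (FreeGroup.lift a) := by
  -- `FreeGroup ι` is the free product of the infinite cyclic groups `FreeGroup Unit`.
  have hlift : FreeGroup.lift a = (Monoid.CoprodI.lift fun i => FreeGroup.lift fun _ => a i).comp
      freeGroupEquivCoprodI.toMonoidHom :=
    FreeGroup.ext_hom _ _ fun i => by simp
  rw [hlift, MonoidHom.coe_comp]
  refine (Monoid.CoprodI.lift_injective_of_ping_pong _ ?_ X hX hXdisj ?_).comp
    freeGroupEquivCoprodI.injective
  · have h3 : 3 ≤ Cardinal.mk (FreeGroup Unit) := by
      rw [Cardinal.mk_congr FreeGroup.equivIntOfUnique, Cardinal.mk_int]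
      exact (Cardinal.natCast_lt_aleph0 (n := 3)).le
    obtain ⟨i⟩ := (inferInstance : Nonempty ι)
    exact Or.inr ⟨i, h3⟩
  · rintro i j hij h hh
    obtain ⟨k, rfl⟩ : ∃ k : ℤ, FreeGroup.of () ^ k = h :=
      ⟨_, FreeGroup.equivIntOfUnique.symm_apply_apply h⟩
    have hk : k ≠ 0 := by rintro rfl; exact hh (zpow_zero _)
    simpa using hpp hij k hk

theorem abs_lt_abs_add_mul {R : Type*} [CommRing R] [LinearOrder R] [IsStrictOrderedRing R]
    {x y c : R} (hc : 2 ≤ |c|) (h : |y| < |x|) : |x| < |y + c * x| := by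
  have h1 : 2 * |x| ≤ |c * x| := by
    rw [abs_mul]; exact mul_le_mul_of_nonneg_right hc (abs_nonneg x)
  have h2 : |c * x| - |y| ≤ |y + c * x| := by
    simpa [add_comm] using abs_sub_abs_le_abs_sub (c * x) (-y)
  linarith

namespace Matrix

variable {ι R : Type*} [Fintype ι] [DecidableEq ι]

section CommRing

variable [CommRing R] {i j : ι}

def transvectionGL (hij : i ≠ j) : Multiplicative R →* GL ι R where
  toFun c := ⟨transvection i j c.toAdd, transvection i j (-c.toAdd),
    by rw [transvection_mul_transvection_same _ _ hij, add_neg_cancel, transvection_zero],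
    by rw [transvection_mul_transvection_same _ _ hij, neg_add_cancel, transvection_zero]⟩
  map_one' := Units.ext (transvection_zero i j)
  map_mul' _ _ := Units.ext (transvection_mul_transvection_same _ _ hij _ _).symm

@[simp]
theorem coe_transvectionGL (hij : i ≠ j) (c : Multiplicative R) :
    (transvectionGL hij c : Matrix ι ι R) = transvection i j c.toAdd := rfl

theorem transvectionGL_zpow (hij : i ≠ j) (c : R) (k : ℤ) :
    transvectionGL hij (.ofAdd c) ^ k = transvectionGL hij (.ofAdd (k * c)) := by
  rw [← map_zpow, ← ofAdd_zsmul, zsmul_eq_mul]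

theorem transvection_mulVec_apply_same (c : R) (v : ι → R) :
    (transvection i j c *ᵥ v) i = v i + c * v j := by
  simp [transvection, add_mulVec, single_mulVec]

theorem transvection_mulVec_apply_of_ne {a : ι} (ha : a ≠ i) (c : R) (v : ι → R) :
    (transvection i j c *ᵥ v) a = v a := by
  simp [transvection, add_mulVec, single_mulVec, ha]

theorem GeneralLinearGroup.map_injective {S : Type*} [CommRing S] {f : R →+* S}
    (hf : Injective f) : Injective (GeneralLinearGroup.map (n := ι) f) :=
  Units.map_injective (Matrix.map_injective hf)

theorem GeneralLinearGroup.map_transvectionGL {S : Type*} [CommRing S] (f : R →+* S)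
    (hij : i ≠ j) (c : R) :
    map f (transvectionGL hij (.ofAdd c)) = transvectionGL hij (.ofAdd (f c)) := by
  ext : 1
  change f.mapMatrix (transvection i j c) = transvection i j (f c)
  rw [transvection, map_add, map_one, RingHom.mapMatrix_apply, map_single, transvection]

end CommRing

section LinearOrderedCommRing

variable [CommRing R] [LinearOrder R] [IsStrictOrderedRing R] {i j : ι}

theorem transvectionGL_zpow_smul_subset (hij : i ≠ j) {c : R} (hc : 2 ≤ |c|) {k : ℤ}
    (hk : k ≠ 0) :
    transvectionGL hij (.ofAdd c) ^ k • {v : ι → R | |v i| < |v j|} ⊆ {v | |v j| < |v i|} := by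
  have hkc : 2 ≤ |k * c| := by
    have : (1 : R) ≤ |(k : R)| := by exact_mod_cast Int.one_le_abs hk
    rw [abs_mul]; nlinarith [abs_nonneg c]
  rw [transvectionGL_zpow]
  rintro _ ⟨v, hv, rfl⟩
  simp only [Set.mem_ofPred_eq, smul_eq_mulVec, coe_transvectionGL, toAdd_ofAdd,
    transvection_mulVec_apply_same, transvection_mulVec_apply_of_ne hij.symm]
  exact abs_lt_abs_add_mul hkc hv

theorem injective_lift_transvectionGL (hij : i ≠ j) {a b : R} (ha : 2 ≤ |a|) (hb : 2 ≤ |b|) :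
    Injective (FreeGroup.lift fun t : Bool =>
      if t then transvectionGL hij.symm (.ofAdd a) else transvectionGL hij (.ofAdd b)) := by
  refine FreeGroup.injective_lift_of_ping_pong_zpow _
    (fun t => if t then {v : ι → R | |v i| < |v j|} else {v | |v j| < |v i|}) ?_ ?_ ?_
  · rintro (_ | _)
    · exact ⟨Pi.single i 1, by simp [hij.symm]⟩
    · exact ⟨Pi.single j 1, by simp [hij]⟩
  · rintro (_ | _) (_ | _) hts <;> simp only [ne_eq, not_true_eq_false] at hts <;>
      exact Set.disjoint_left.mpr fun v h₁ h₂ => lt_asymm h₁ h₂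
  · rintro (_ | _) (_ | _) hts k hk <;> simp only [ne_eq, not_true_eq_false] at hts
    · exact transvectionGL_zpow_smul_subset hij hb hk
    · exact transvectionGL_zpow_smul_subset hij.symm ha hk

end LinearOrderedCommRing

end Matrix

open Matrix in
/-- Let `K` be a field of characteristic `0` and `n ≥ 2`. Then `GLₙ(K)` contains a
non-cyclic free subgroup: the matrices `A = 1 + 2·E₂₁` and `B = 1 + 2·E₁₂` (where `Eᵢⱼ`
is the matrix unit with a single `1` in position `(i,j)`) generate a free subgroup of
rank 2, i.e. the group homomorphism from the free group on two generators (indexed by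
`Bool`) sending the generators to `A` and `B` is injective. -/
theorem free_subgroup_GLn_charZero (K : Type) [Field K] [CharZero K]
    (n : ℕ) (hn : 2 ≤ n) :
    ∃ A B : GL (Fin n) K,
      (A : Matrix (Fin n) (Fin n) K) =
        1 + Matrix.single (⟨1, by omega⟩ : Fin n) (⟨0, by omega⟩ : Fin n) (2 : K) ∧
      (B : Matrix (Fin n) (Fin n) K) =
        1 + Matrix.single (⟨0, by omega⟩ : Fin n) (⟨1, by omega⟩ : Fin n) (2 : K) ∧
      Function.Injective (FreeGroup.lift fun t : Bool => if t then A else B) := by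
  have hij : (⟨0, by omega⟩ : Fin n) ≠ ⟨1, by omega⟩ := by simp
  let A₀ : GL (Fin n) ℤ := transvectionGL hij.symm (.ofAdd 2)
  let B₀ : GL (Fin n) ℤ := transvectionGL hij (.ofAdd 2)
  have hfree : Injective (FreeGroup.lift fun t : Bool => if t then A₀ else B₀) :=
    injective_lift_transvectionGL hij (by norm_num) (by norm_num)
  let φ := GeneralLinearGroup.map (n := Fin n) (Int.castRingHom K)
  refine ⟨φ A₀, φ B₀, ?_, ?_, ?_⟩
  · simp [φ, A₀, GeneralLinearGroup.map_transvectionGL, transvection]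
  · simp [φ, B₀, GeneralLinearGroup.map_transvectionGL, transvection]
  · have hlift : (FreeGroup.lift fun t : Bool => if t then φ A₀ else φ B₀) =
        φ.comp (FreeGroup.lift fun t : Bool => if t then A₀ else B₀) :=
      FreeGroup.ext_hom _ _ fun t => by cases t <;> simp
    rw [hlift, MonoidHom.coe_comp]
    exact (GeneralLinearGroup.map_injective Int.cast_injective).comp hfree
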